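/- (Block-encoding of a linear combination of unitaries) Let H be a complex Hilbert space, J a finite index set, U_j unitaries on H for j ∈ J, and α_j ≥ 0 with α := Σ_{j∈J} α_j > 0. Let the ancilla space be ℂ^J with orthonormal basis {|j⟩}, fix a distinguished j₀ ∈ J playing the role of |0⟩, and let G be any unitary on ℂ^J with G|0⟩ = Σ_{j∈J} √(α_j/α) |j⟩. Then the unitary O = (G ⊗ I)† (Σ_{j∈J} |j⟩⟨j| ⊗ U_j) (G ⊗ I) satisfies ⟨0| O |0⟩ = (1/α) Σ_{j∈J} α_j U_j, i.e., O block-encodes H₀/α for H₀ = Σ_j α_j U_j. -/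

import Mathlib

open scoped BigOperators
open Complex

set_option maxHeartbeats 1000000
set_option synthInstance.maxHeartbeats 400000

noncomputable section

namespace LCU

variable {H : Type} [NormedAddCommGroup H] [InnerProductSpace ℂ H]

/-- The tensor product `ℂ^J ⊗ H`, realized as the `ℓ²`-space of `H`-valued functions on `J`. -/
abbrev TSpace (J : Type) [Fintype J] (H : Type) [NormedAddCommGroup H]
    [InnerProductSpace ℂ H] : Type :=
  PiLp 2 (fun _ : J => H)

variable {J : Type} [Fintype J] [DecidableEq J]

instance [CompleteSpace H] : CompleteSpace (TSpace J H) :=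
  inferInstanceAs (CompleteSpace (PiLp 2 (fun _ : J => H)))

/-- Inclusion `H →L ℂ^J ⊗ H` of the component labelled by `j`, i.e. `ψ ↦ |j⟩ ⊗ ψ`. -/
def inclA (j : J) : H →L[ℂ] TSpace J H :=
  ((PiLp.continuousLinearEquiv 2 ℂ (fun _ : J => H)).symm.toContinuousLinearMap).comp
    (ContinuousLinearMap.pi (fun k => if k = j then ContinuousLinearMap.id ℂ H else 0))

/-- Projection `ℂ^J ⊗ H →L H` onto the component labelled by `j`, i.e. `⟨j| ⊗ I`. -/
def projA (j : J) : TSpace J H →L[ℂ] H :=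
  (ContinuousLinearMap.proj j).comp
    (PiLp.continuousLinearEquiv 2 ℂ (fun _ : J => H)).toContinuousLinearMap

/-- `G ⊗ I` on `ℂ^J ⊗ H`, for `G` an operator on the ancilla `ℂ^J`:
`(G ⊗ I)(|k⟩ ⊗ ψ) = Σ_j ⟨j|G|k⟩ |j⟩ ⊗ ψ`. -/
def ancTensorId (G : EuclideanSpace ℂ J →L[ℂ] EuclideanSpace ℂ J) :
    TSpace J H →L[ℂ] TSpace J H :=
  ∑ j : J, ∑ k : J,
    (inner ℂ (EuclideanSpace.single j (1 : ℂ)) (G (EuclideanSpace.single k (1 : ℂ))) : ℂ) •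
      ((inclA j).comp (projA k))

/-- The select operator `Σ_{j∈J} |j⟩⟨j| ⊗ U_j`. -/
def select (Uj : J → H →L[ℂ] H) : TSpace J H →L[ℂ] TSpace J H :=
  ∑ j : J, (inclA j).comp ((Uj j).comp (projA j))

end LCU

/-! With `v = G|0⟩`, the map `(G ⊗ I) ∘ (|0⟩ ⊗ ·)` is `ψ ↦ |v⟩ ⊗ ψ`, and `⟨0| ⊗ I` is the adjoint
of `|0⟩ ⊗ ·`. So `⟨0|O|0⟩` is the compression of the select operator by `ψ ↦ |v⟩ ⊗ ψ`, which is
`Σ_j |v_j|² U_j = Σ_j (α_j / α) U_j`. -/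

namespace LCU

variable {H : Type} [NormedAddCommGroup H] [InnerProductSpace ℂ H] {J : Type} [Fintype J]

@[simp]
lemma projA_apply (j : J) (f : TSpace J H) : projA j f = f j := rfl

@[simp]
lemma inclA_apply [DecidableEq J] (j k : J) (ψ : H) :
    inclA j ψ k = if k = j then ψ else 0 := by
  simp [inclA, apply_ite (fun T : H →L[ℂ] H => T ψ)]

lemma adjoint_inclA [CompleteSpace H] [DecidableEq J] (j : J) :
    ContinuousLinearMap.adjoint (inclA j : H →L[ℂ] TSpace J H) = projA j := by
  rw [eq_comm, ContinuousLinearMap.eq_adjoint_iff]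
  intro f ψ
  simp [PiLp.inner_apply, apply_ite (inner ℂ _)]

lemma projA_comp_adjoint_comp_comp_inclA [CompleteSpace H] [DecidableEq J]
    (A S : TSpace J H →L[ℂ] TSpace J H) (j : J) :
    (projA j).comp (((ContinuousLinearMap.adjoint A).comp (S.comp A)).comp (inclA j)) =
      (ContinuousLinearMap.adjoint (A.comp (inclA j))).comp (S.comp (A.comp (inclA j))) := by
  rw [ContinuousLinearMap.adjoint_comp, adjoint_inclA]
  rfl

lemma ancTensorId_inclA_apply [DecidableEq J] (G : EuclideanSpace ℂ J →L[ℂ] EuclideanSpace ℂ J)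
    (j k : J) (ψ : H) :
    ancTensorId G (inclA j ψ) k = G (EuclideanSpace.single j 1) k • ψ := by
  simp [ancTensorId, EuclideanSpace.inner_single_left]

lemma select_apply [DecidableEq J] (U : J → H →L[ℂ] H) (f : TSpace J H) (k : J) :
    select U f k = U k (f k) := by
  simp [select]

lemma adjoint_comp_select_comp [CompleteSpace H] [DecidableEq J] (U : J → H →L[ℂ] H)
    (v : EuclideanSpace ℂ J) (T : H →L[ℂ] TSpace J H) (hT : ∀ ψ k, T ψ k = v k • ψ) :
    (ContinuousLinearMap.adjoint T).comp ((select U).comp T) =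
      ∑ k, ((‖v k‖ ^ 2 : ℝ) : ℂ) • U k := by
  ext ψ
  refine ext_inner_left ℂ fun φ => ?_
  simp [ContinuousLinearMap.adjoint_inner_right, PiLp.inner_apply, select_apply, hT, inner_sum,
    inner_smul_left, inner_smul_right, ← mul_assoc, Complex.mul_conj']

end LCU

theorem lcu_block_encoding_general
    {H : Type} [NormedAddCommGroup H] [InnerProductSpace ℂ H] [CompleteSpace H]
    {J : Type} [Fintype J] [DecidableEq J]
    (Uj : J → H →L[ℂ] H)
    (αj : J → ℝ) (hαj : ∀ j, 0 ≤ αj j) (α : ℝ) (hαpos : 0 < α)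
    (j₀ : J)
    (G : EuclideanSpace ℂ J →L[ℂ] EuclideanSpace ℂ J)
    (hG0 : G (EuclideanSpace.single j₀ (1 : ℂ)) =
      ∑ j : J, ((Real.sqrt (αj j / α) : ℝ) : ℂ) • EuclideanSpace.single j (1 : ℂ)) :
    (LCU.projA j₀).comp
        (((ContinuousLinearMap.adjoint (LCU.ancTensorId (H := H) G)).comp
          ((LCU.select Uj).comp (LCU.ancTensorId (H := H) G))).comp (LCU.inclA j₀)) =
      (((α : ℝ) : ℂ))⁻¹ • ∑ j : J, ((αj j : ℝ) : ℂ) • Uj j := by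
  have hweight : ∀ k, ‖G (EuclideanSpace.single j₀ 1) k‖ ^ 2 = αj k / α := fun k => by
    simp [hG0, Pi.single_apply, Real.sq_sqrt (div_nonneg (hαj k) hαpos.le)]
  rw [LCU.projA_comp_adjoint_comp_comp_inclA,
    LCU.adjoint_comp_select_comp Uj _ _ fun ψ k => LCU.ancTensorId_inclA_apply G j₀ k ψ]
  simp only [hweight, Finset.smul_sum, smul_smul, div_eq_inv_mul, Complex.ofReal_mul,
    Complex.ofReal_inv]

/-- **Block-encoding of a linear combination of unitaries.**
With `α = Σ_j α_j > 0`, `α_j ≥ 0`, a unitary `G` on `ℂ^J` with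
`G|0⟩ = Σ_j √(α_j/α) |j⟩` (where `|0⟩ = |j₀⟩`), the unitary
`O = (G ⊗ I)† (Σ_j |j⟩⟨j| ⊗ U_j) (G ⊗ I)` satisfies `⟨0| O |0⟩ = (1/α) Σ_j α_j U_j`. -/
theorem lcu_block_encoding
    {H : Type} [NormedAddCommGroup H] [InnerProductSpace ℂ H] [CompleteSpace H]
    {J : Type} [Fintype J] [DecidableEq J]
    (Uj : J → H →L[ℂ] H) (hUj : ∀ j, Uj j ∈ unitary (H →L[ℂ] H))
    (αj : J → ℝ) (hαj : ∀ j, 0 ≤ αj j) (α : ℝ) (hα : α = ∑ j, αj j) (hαpos : 0 < α)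
    (j₀ : J)
    (G : EuclideanSpace ℂ J →L[ℂ] EuclideanSpace ℂ J)
    (hG : G ∈ unitary (EuclideanSpace ℂ J →L[ℂ] EuclideanSpace ℂ J))
    (hG0 : G (EuclideanSpace.single j₀ (1 : ℂ)) =
      ∑ j : J, ((Real.sqrt (αj j / α) : ℝ) : ℂ) • EuclideanSpace.single j (1 : ℂ)) :
    (LCU.projA j₀).comp
        (((ContinuousLinearMap.adjoint (LCU.ancTensorId (H := H) G)).comp
          ((LCU.select Uj).comp (LCU.ancTensorId (H := H) G))).comp (LCU.inclA j₀)) =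
      (((α : ℝ) : ℂ))⁻¹ • ∑ j : J, ((αj j : ℝ) : ℂ) • Uj j :=
  lcu_block_encoding_general Uj αj hαj α hαpos j₀ G hG0
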